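/- Let p be an odd prime and let s be an integer with 0 < s < p−1. Then in the polynomial ring F_p[α] the identity b_{1,s}(α) · b_{1,s}(−α) = 1 − α^{p−1} holds. -/
import Mathlib

noncomputable def binomF {K : Type*} [Field K] (f : K) (m : ℕ) : K :=
  Polynomial.eval f (descPochhammer K m) / (m.factorial : K)

noncomputable def bPoly (p : ℕ) [Fact p.Prime] (r s : ℕ) : Polynomial (ZMod p) :=
  ∑ k ∈ Finset.range p,
    Polynomial.C ((-(r : ZMod p) / (s : ZMod p)) ^ k /
        (((p - 1 - k).factorial : ZMod p) * (k.factorial : ZMod p))) *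
      Polynomial.eval (Polynomial.C (r : ZMod p) * Polynomial.X - 1)
        (descPochhammer (Polynomial (ZMod p)) (p - 1 - k)) *
      Polynomial.eval (Polynomial.C (s : ZMod p) * Polynomial.X - 1)
        (descPochhammer (Polynomial (ZMod p)) k)

open Polynomial Finset

namespace Stmt10

variable {K : Type*} [Field K]

/-- eval of eval of descPochhammer over polynomial ring -/
lemma eval_eval_dP (u : K[X]) (t : K) (m : ℕ) :
    (Polynomial.eval u (descPochhammer K[X] m)).eval t
      = (descPochhammer K m).eval (u.eval t) := by
  rw [← descPochhammer_map (C : K →+* K[X]) m, Polynomial.eval_map]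
  rw [show Polynomial.eval₂ C u (descPochhammer K m) = (descPochhammer K m).comp u from rfl,
    Polynomial.eval_comp]

lemma dP_eval_neg_one (m : ℕ) :
    (descPochhammer K m).eval (-1) = (-1) ^ m * (m.factorial : K) := by
  induction m with
  | zero => simp
  | succ m ih =>
    rw [descPochhammer_succ_eval, ih, Nat.factorial_succ]
    push_cast
    ring_nf

end Stmt10

namespace PartA

variable (p : ℕ) [Fact p.Prime]

lemma fact_ne {n : ℕ} (hn : n < p) : ((n.factorial : ZMod p) ≠ 0) := by
  rw [Ne, ZMod.natCast_eq_zero_iff]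
  intro h
  exact absurd ((Nat.Prime.dvd_factorial (Fact.out)).mp h) (by omega)

lemma evalB (s : ℕ) (t : ZMod p) :
    (bPoly p 1 s).eval t = ∑ k ∈ Finset.range p,
      (-(1 : ZMod p) / (s : ZMod p)) ^ k /
          (((p - 1 - k).factorial : ZMod p) * (k.factorial : ZMod p)) *
        (descPochhammer (ZMod p) (p - 1 - k)).eval (t - 1) *
        (descPochhammer (ZMod p) k).eval ((s : ZMod p) * t - 1) := by
  rw [bPoly, Polynomial.eval_finset_sum]
  refine Finset.sum_congr rfl fun k hk => ?_
  rw [Polynomial.eval_mul, Polynomial.eval_mul, Polynomial.eval_C,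
    Stmt10.eval_eval_dP, Stmt10.eval_eval_dP]
  simp


lemma vanish (s : ℕ) (A B : ℕ) (hA : 1 ≤ A) (hcond : A - 1 + B < p - 1)
    (t : ZMod p) (ht : t = (A : ZMod p)) (hB : (B : ZMod p) = (s : ZMod p) * t - 1) :
    (bPoly p 1 s).eval t = 0 := by
  rw [evalB]
  refine Finset.sum_eq_zero fun k hk => ?_
  rw [Finset.mem_range] at hk
  have ht1 : t - 1 = ((A - 1 : ℕ) : ZMod p) := by
    rw [ht, Nat.cast_sub hA, Nat.cast_one]
  rw [ht1, ← hB, descPochhammer_eval_eq_descFactorial, descPochhammer_eval_eq_descFactorial]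
  rcases le_or_gt (p - 1 - k) (A - 1) with h1 | h1
  · have h2 : B < k := by omega
    rw [Nat.descFactorial_eq_zero_iff_lt.mpr h2]
    simp
  · rw [Nat.descFactorial_eq_zero_iff_lt.mpr h1]
    simp

lemma s_cast_ne (s : ℕ) (hs0 : 0 < s) (hsp : s < p - 1) : (s : ZMod p) ≠ 0 := by
  rw [Ne, ZMod.natCast_eq_zero_iff]
  intro h
  have h2 : 2 ≤ p := (Fact.out : p.Prime).two_le
  have := Nat.le_of_dvd hs0 h
  omega

lemma eval0 (s : ℕ) (hodd : Odd p) (hs0 : 0 < s) (hsp : s < p - 1) :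
    (bPoly p 1 s).eval 0 = 1 := by
  have h2 : 2 ≤ p := (Fact.out : p.Prime).two_le
  have hsne := s_cast_ne p s hs0 hsp
  set x : ZMod p := -(1 : ZMod p) / (s : ZMod p) with hx
  have hpe : (-1 : ZMod p) ^ (p - 1) = 1 :=
    Even.neg_one_pow (Nat.Odd.sub_odd hodd odd_one)
  have hterm : ∀ k ∈ Finset.range p,
      x ^ k / (((p - 1 - k).factorial : ZMod p) * (k.factorial : ZMod p)) *
        (descPochhammer (ZMod p) (p - 1 - k)).eval ((0:ZMod p) - 1) *
        (descPochhammer (ZMod p) k).eval ((s : ZMod p) * 0 - 1) = x ^ k := by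
    intro k hk
    rw [Finset.mem_range] at hk
    have hF1 : (((p - 1 - k).factorial : ZMod p)) ≠ 0 := fact_ne p (by omega)
    have hF2 : ((k.factorial : ZMod p)) ≠ 0 := fact_ne p (by omega)
    rw [zero_sub, mul_zero, zero_sub, Stmt10.dP_eval_neg_one, Stmt10.dP_eval_neg_one,
      div_mul_eq_mul_div, div_mul_eq_mul_div, div_eq_iff (mul_ne_zero hF1 hF2)]
    have : x ^ k * ((-1 : ZMod p) ^ (p - 1 - k) * ((p - 1 - k).factorial : ZMod p)) *
        ((-1 : ZMod p) ^ k * (k.factorial : ZMod p))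
        = x ^ k * ((-1 : ZMod p) ^ (p - 1 - k) * (-1 : ZMod p) ^ k) *
          (((p - 1 - k).factorial : ZMod p) * (k.factorial : ZMod p)) := by ring
    rw [this, ← pow_add, show p - 1 - k + k = p - 1 by omega, hpe, mul_one]
  rw [evalB, Finset.sum_congr rfl hterm]
  have hx1 : x - 1 ≠ 0 := by
    rw [sub_ne_zero, hx]
    intro h
    rw [div_eq_iff hsne, one_mul] at h
    have hc : ((s + 1 : ℕ) : ZMod p) = 0 := by push_cast; rw [← h]; ring
    rw [ZMod.natCast_eq_zero_iff] at hc
    have := Nat.le_of_dvd (by omega) hc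
    omega
  have hgeo : (∑ k ∈ Finset.range p, x ^ k) * (x - 1) = 1 * (x - 1) := by
    rw [geom_sum_mul, ZMod.pow_card, one_mul]
  exact mul_right_cancel₀ hx1 hgeo

lemma evalProd (s : ℕ) (hodd : Odd p) (hs0 : 0 < s) (hsp : s < p - 1) (t : ZMod p) :
    (bPoly p 1 s).eval t * (bPoly p 1 s).eval (-t) = 1 - t ^ (p - 1) := by
  have h2 : 2 ≤ p := (Fact.out : p.Prime).two_le
  have hsne := s_cast_ne p s hs0 hsp
  by_cases ht : t = 0
  · rw [ht, neg_zero, eval0 p s hodd hs0 hsp, mul_one, zero_pow (by omega : p - 1 ≠ 0), sub_zero]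
  · rw [ZMod.pow_card_sub_one_eq_one ht, sub_self]
    have hst : (s : ZMod p) * t ≠ 0 := mul_ne_zero hsne ht
    set A := t.val with hAdef
    set u := ((s : ZMod p) * t).val with hudef
    have hA1 : 1 ≤ A := Nat.one_le_iff_ne_zero.mpr (fun h => ht (by rwa [ZMod.val_eq_zero] at h))
    have hAp : A < p := ZMod.val_lt t
    have hu1 : 1 ≤ u := Nat.one_le_iff_ne_zero.mpr
      (fun h => hst (by rwa [ZMod.val_eq_zero] at h))
    have hup : u < p := ZMod.val_lt _
    have htA : t = (A : ZMod p) := (ZMod.natCast_rightInverse t).symm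
    have hsu : ((u : ℕ) : ZMod p) = (s : ZMod p) * t := ZMod.natCast_rightInverse _
    rcases le_or_gt (A + u) p with hcase | hcase
    · rw [PartA.vanish p s A (u - 1) hA1 (by omega) t htA
        (by rw [Nat.cast_sub hu1, Nat.cast_one, hsu]), zero_mul]
    · have ht' : -t = ((p - A : ℕ) : ZMod p) := by
        rw [Nat.cast_sub hAp.le, ZMod.natCast_self, zero_sub, ← htA]
      have hB' : ((p - u - 1 : ℕ) : ZMod p) = (s : ZMod p) * (-t) - 1 := by
        rw [Nat.cast_sub (by omega : 1 ≤ p - u), Nat.cast_sub hup.le,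
          ZMod.natCast_self, zero_sub, Nat.cast_one, hsu, mul_neg]
      rw [PartA.vanish p s (p - A) (p - u - 1) (by omega) (by omega) (-t) ht' hB', mul_zero]

end PartA

namespace PartB

open Polynomial Finset

section Helpers

variable {S : Type*} [CommRing S]

lemma coeff_sum_CX (f : ℕ → S) (N m : ℕ) :
    (∑ n ∈ Finset.range N, Polynomial.C (f n) * Polynomial.X ^ n).coeff m
      = if m < N then f m else 0 := by
  rw [Polynomial.finset_sum_coeff]
  simp only [Polynomial.coeff_C_mul, Polynomial.coeff_X_pow, mul_ite, mul_one, mul_zero]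
  rw [Finset.sum_ite_eq]
  simp

lemma cong_mul {n : ℕ} {a b c d : Polynomial S}
    (h1 : Polynomial.X ^ n ∣ a - b) (h2 : Polynomial.X ^ n ∣ c - d) :
    Polynomial.X ^ n ∣ a * c - b * d := by
  have h : a * c - b * d = (a - b) * c + b * (c - d) := by ring
  rw [h]
  exact dvd_add (h1.mul_right c) (h2.mul_left b)

lemma cong_refl (n : ℕ) (a : Polynomial S) : Polynomial.X ^ n ∣ a - a := by
  simp

end Helpers

lemma cong_cancel {F : Type*} [Field F] (v : Polynomial F) (hv : v.coeff 0 ≠ 0) :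
    ∀ (n : ℕ) (f : Polynomial F), Polynomial.X ^ n ∣ v * f → Polynomial.X ^ n ∣ f := by
  intro n
  induction n with
  | zero => intro f _; simp
  | succ n ih =>
    intro f h
    have hX : (Polynomial.X : Polynomial F) ∣ v * f :=
      dvd_trans (dvd_pow_self Polynomial.X (Nat.succ_ne_zero n)) h
    rw [Polynomial.X_dvd_iff, Polynomial.mul_coeff_zero] at hX
    have hf0 : f.coeff 0 = 0 := by
      rcases mul_eq_zero.mp hX with h' | h'
      · exact absurd h' hv
      · exact h'
    obtain ⟨g, rfl⟩ := Polynomial.X_dvd_iff.mpr hf0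
    have h2 : Polynomial.X * Polynomial.X ^ n ∣ Polynomial.X * (v * g) := by
      rw [show Polynomial.X * (v * g) = v * (Polynomial.X * g) by ring, ← pow_succ']
      exact h
    have h3 : Polynomial.X ^ n ∣ v * g :=
      (mul_dvd_mul_iff_left (Polynomial.X_ne_zero (R := F))).mp h2
    rw [pow_succ']
    exact mul_dvd_mul_left _ (ih g h3)

variable (p : ℕ) [Fact p.Prime]

noncomputable def bin (β : Polynomial (ZMod p)) (n : ℕ) : Polynomial (ZMod p) :=
  Polynomial.C ((n.factorial : ZMod p))⁻¹ *
    Polynomial.eval β (descPochhammer (Polynomial (ZMod p)) n)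

noncomputable def W (c : ZMod p) (β : Polynomial (ZMod p)) : Polynomial (Polynomial (ZMod p)) :=
  ∑ n ∈ Finset.range p,
    Polynomial.C (Polynomial.C (c ^ n) * bin p β n) * Polynomial.X ^ n

noncomputable def Neg1 (c : ZMod p) : Polynomial (ZMod p) :=
  ∑ n ∈ Finset.range p, Polynomial.C ((-c) ^ n) * Polynomial.X ^ n

noncomputable def h0 (x : ZMod p) (s : ℕ) : Polynomial (ZMod p) :=
  (1 + Polynomial.X) * (1 + Polynomial.C x * Polynomial.X) ^ s - 1

noncomputable def Sm (x : ZMod p) (s : ℕ) : Polynomial (Polynomial (ZMod p)) :=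
  ∑ j ∈ Finset.range p,
    Polynomial.C (bin p Polynomial.X j) * (Polynomial.map Polynomial.C (h0 p x s)) ^ j

noncomputable def Mm (x : ZMod p) (s : ℕ) : Polynomial (Polynomial (ZMod p)) :=
  Polynomial.map Polynomial.C (Neg1 p 1 * Neg1 p x) * Sm p x s

noncomputable def Lh (x : ZMod p) (s : ℕ) : Polynomial (Polynomial (ZMod p)) :=
  W p 1 (Polynomial.X - 1) * W p x (Polynomial.C (s : ZMod p) * Polynomial.X - 1)

lemma trunc_pow (u : Polynomial (ZMod p)) (hu : u.coeff 0 = 0) (N : ℕ) :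
    (Polynomial.X : Polynomial (ZMod p)) ^ p ∣
      (1 + u) ^ N - ∑ j ∈ Finset.range p, Polynomial.C ((N.choose j : ZMod p)) * u ^ j := by
  have hXu : (Polynomial.X : Polynomial (ZMod p)) ∣ u := Polynomial.X_dvd_iff.mpr hu
  have hexp : (1 + u) ^ N
      = ∑ j ∈ Finset.range (N + 1), Polynomial.C ((N.choose j : ZMod p)) * u ^ j := by
    rw [add_comm (1 : Polynomial (ZMod p)) u, add_pow]
    refine Finset.sum_congr rfl fun j hj => ?_
    rw [one_pow, mul_one, ← map_natCast (Polynomial.C : ZMod p →+* Polynomial (ZMod p)),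
      mul_comm]
  rw [hexp]
  have hsub : Finset.range p ⊆ Finset.range (max (N + 1) p) :=
    Finset.range_subset_range.mpr (le_max_right _ _)
  have e1 : ∑ j ∈ Finset.range (N + 1), Polynomial.C ((N.choose j : ZMod p)) * u ^ j
      = ∑ j ∈ Finset.range (max (N + 1) p), Polynomial.C ((N.choose j : ZMod p)) * u ^ j := by
    refine Finset.sum_subset (Finset.range_subset_range.mpr (le_max_left _ _)) fun j _ hj => ?_
    rw [Finset.mem_range] at hj
    rw [Nat.choose_eq_zero_of_lt (by omega), Nat.cast_zero, Polynomial.C_0, zero_mul]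
  rw [e1, ← Finset.sum_sdiff hsub, add_sub_cancel_right]
  refine Finset.dvd_sum fun j hj => ?_
  have hjp : p ≤ j := by
    have := (Finset.mem_sdiff.mp hj).2
    rw [Finset.mem_range] at this
    omega
  exact ((pow_dvd_pow Polynomial.X hjp).trans (pow_dvd_pow_of_dvd hXu j)).mul_left _

lemma trunc_one_add (c : ZMod p) (D : ℕ) :
    (Polynomial.X : Polynomial (ZMod p)) ^ p ∣
      (1 + Polynomial.C c * Polynomial.X) ^ D
        - ∑ n ∈ Finset.range p,
            Polynomial.C ((D.choose n : ZMod p) * c ^ n) * Polynomial.X ^ n := by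
  have h := trunc_pow p (Polynomial.C c * Polynomial.X) (by simp) D
  have e : ∑ n ∈ Finset.range p,
        Polynomial.C ((D.choose n : ZMod p)) * (Polynomial.C c * Polynomial.X) ^ n
      = ∑ n ∈ Finset.range p,
          Polynomial.C ((D.choose n : ZMod p) * c ^ n) * Polynomial.X ^ n := by
    refine Finset.sum_congr rfl fun n _ => ?_
    rw [mul_pow, ← Polynomial.C_pow, Polynomial.C_mul, mul_assoc]
  rwa [e] at h

end PartB

namespace PartB

open Polynomial Finset

variable (p : ℕ) [Fact p.Prime]

lemma W_coeff (c : ZMod p) (β : Polynomial (ZMod p)) (n : ℕ) :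
    (W p c β).coeff n = if n < p then Polynomial.C (c ^ n) * bin p β n else 0 :=
  coeff_sum_CX _ _ _

lemma bin_eval (β : Polynomial (ZMod p)) (n : ℕ) (t : ZMod p) :
    (bin p β n).eval t
      = ((n.factorial : ZMod p))⁻¹ * (descPochhammer (ZMod p) n).eval (β.eval t) := by
  rw [bin, Polynomial.eval_mul, Polynomial.eval_C, Stmt10.eval_eval_dP]

lemma bin_eval_nat (β : Polynomial (ZMod p)) (n : ℕ) (hn : n < p) (t : ZMod p) (D : ℕ)
    (hβ : β.eval t = (D : ZMod p)) :
    (bin p β n).eval t = (D.choose n : ZMod p) := by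
  rw [bin_eval, hβ, descPochhammer_eval_eq_descFactorial,
    Nat.descFactorial_eq_factorial_mul_choose, Nat.cast_mul, ← mul_assoc,
    inv_mul_cancel₀ (PartA.fact_ne p hn), one_mul]

lemma map_W (c : ZMod p) (β : Polynomial (ZMod p)) (t : ZMod p) :
    (W p c β).map (Polynomial.evalRingHom t)
      = ∑ n ∈ Finset.range p,
          Polynomial.C (c ^ n * (bin p β n).eval t) * Polynomial.X ^ n := by
  rw [W, Polynomial.map_sum]
  refine Finset.sum_congr rfl fun n _ => ?_
  rw [Polynomial.map_mul, Polynomial.map_pow, Polynomial.map_X, Polynomial.map_C]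
  simp [Polynomial.eval_mul]

lemma phi_W_nat (c : ZMod p) (β : Polynomial (ZMod p)) (t : ZMod p) (D : ℕ)
    (hβ : β.eval t = (D : ZMod p)) :
    (Polynomial.X : Polynomial (ZMod p)) ^ p ∣
      (1 + Polynomial.C c * Polynomial.X) ^ D
        - (W p c β).map (Polynomial.evalRingHom t) := by
  rw [map_W]
  have e : ∑ n ∈ Finset.range p,
        Polynomial.C (c ^ n * (bin p β n).eval t) * Polynomial.X ^ n
      = ∑ n ∈ Finset.range p,
          Polynomial.C ((D.choose n : ZMod p) * c ^ n) * Polynomial.X ^ n := by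
    refine Finset.sum_congr rfl fun n hn => ?_
    rw [Finset.mem_range] at hn
    rw [bin_eval_nat p β n hn t D hβ]
    ring_nf
  rw [e]
  exact trunc_one_add p c D

lemma neg1_eq (c : ZMod p) :
    Neg1 p c = ∑ n ∈ Finset.range p, (-(Polynomial.C c * Polynomial.X)) ^ n := by
  rw [Neg1]
  refine Finset.sum_congr rfl fun n _ => ?_
  rw [show -(Polynomial.C c * Polynomial.X) = Polynomial.C (-c) * Polynomial.X by
      rw [Polynomial.C_neg]; ring,
    mul_pow, ← Polynomial.C_pow]

lemma neg1_mul (c : ZMod p) :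
    (Polynomial.X : Polynomial (ZMod p)) ^ p ∣
      (1 + Polynomial.C c * Polynomial.X) * Neg1 p c - 1 := by
  have hg := geom_sum_mul (-(Polynomial.C c * Polynomial.X)) p
  have e : (1 + Polynomial.C c * Polynomial.X) * Neg1 p c - 1
      = -(-(Polynomial.C c * Polynomial.X)) ^ p := by
    rw [neg1_eq]
    rw [show (1 + Polynomial.C c * Polynomial.X) *
          (∑ n ∈ Finset.range p, (-(Polynomial.C c * Polynomial.X)) ^ n)
        = -((∑ n ∈ Finset.range p, (-(Polynomial.C c * Polynomial.X)) ^ n) *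
            (-(Polynomial.C c * Polynomial.X) - 1)) by ring, hg]
    ring_nf
  rw [e]
  have hx : (Polynomial.X : Polynomial (ZMod p)) ∣ -(Polynomial.C c * Polynomial.X) :=
    dvd_neg.mpr (Dvd.intro_left _ rfl)
  exact dvd_neg.mpr (pow_dvd_pow_of_dvd hx p)

lemma phi_mapC (t : ZMod p) (q : Polynomial (ZMod p)) :
    (Polynomial.map Polynomial.C q).map (Polynomial.evalRingHom t) = q := by
  rw [Polynomial.map_map]
  have h : (Polynomial.evalRingHom t).comp (Polynomial.C : ZMod p →+* Polynomial (ZMod p))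
      = RingHom.id _ := by
    ext a
    simp
  rw [h, Polynomial.map_id]

lemma h0_coeff0 (x : ZMod p) (s : ℕ) : (h0 p x s).coeff 0 = 0 := by
  rw [Polynomial.coeff_zero_eq_eval_zero]
  simp [h0]

lemma phi_S (x : ZMod p) (s : ℕ) (t : ZMod p) (N : ℕ) (hN : (N : ZMod p) = t) :
    (Polynomial.X : Polynomial (ZMod p)) ^ p ∣
      (1 + h0 p x s) ^ N - (Sm p x s).map (Polynomial.evalRingHom t) := by
  rw [Sm, Polynomial.map_sum]
  have e : ∑ j ∈ Finset.range p,
        (Polynomial.C (bin p Polynomial.X j) *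
          (Polynomial.map Polynomial.C (h0 p x s)) ^ j).map (Polynomial.evalRingHom t)
      = ∑ j ∈ Finset.range p, Polynomial.C ((N.choose j : ZMod p)) * (h0 p x s) ^ j := by
    refine Finset.sum_congr rfl fun j hj => ?_
    rw [Finset.mem_range] at hj
    rw [Polynomial.map_mul, Polynomial.map_pow, phi_mapC, Polynomial.map_C]
    congr 2
    exact bin_eval_nat p Polynomial.X j hj t N (by rw [Polynomial.eval_X, hN])
  rw [e]
  exact trunc_pow p _ (h0_coeff0 p x s) N

end PartB

namespace PartB

open Polynomial Finset

variable (p : ℕ) [Fact p.Prime]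

lemma pointwise (x : ZMod p) (s : ℕ) (hs0 : 0 < s) (t : ZMod p) (N : ℕ) (hN1 : 1 ≤ N)
    (hNt : (N : ZMod p) = t) :
    (Polynomial.X : Polynomial (ZMod p)) ^ p ∣
      (Lh p x s).map (Polynomial.evalRingHom t)
        - (Mm p x s).map (Polynomial.evalRingHom t) := by
  set q1 : Polynomial (ZMod p) := 1 + Polynomial.C (1 : ZMod p) * Polynomial.X with hq1
  set qx : Polynomial (ZMod p) := 1 + Polynomial.C x * Polynomial.X with hqx
  set φL := (Lh p x s).map (Polynomial.evalRingHom t) with hφL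
  set φM := (Mm p x s).map (Polynomial.evalRingHom t) with hφM
  have hsN : 1 ≤ s * N := Nat.one_le_iff_ne_zero.mpr (by positivity)
  -- L side
  have hW1 : (Polynomial.X : Polynomial (ZMod p)) ^ p ∣
      q1 ^ (N - 1) - (W p 1 (Polynomial.X - 1)).map (Polynomial.evalRingHom t) :=
    phi_W_nat p 1 _ t (N - 1)
      (by rw [Polynomial.eval_sub, Polynomial.eval_X, Polynomial.eval_one,
            Nat.cast_sub hN1, Nat.cast_one, hNt])
  have hWx : (Polynomial.X : Polynomial (ZMod p)) ^ p ∣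
      qx ^ (s * N - 1)
        - (W p x (Polynomial.C (s : ZMod p) * Polynomial.X - 1)).map
            (Polynomial.evalRingHom t) :=
    phi_W_nat p x _ t (s * N - 1)
      (by rw [Polynomial.eval_sub, Polynomial.eval_mul, Polynomial.eval_C, Polynomial.eval_X,
            Polynomial.eval_one, Nat.cast_sub hsN, Nat.cast_mul, Nat.cast_one, hNt])
  have hL : (Polynomial.X : Polynomial (ZMod p)) ^ p ∣
      q1 ^ (N - 1) * qx ^ (s * N - 1) - φL := by
    rw [hφL, Lh, Polynomial.map_mul]
    exact cong_mul hW1 hWx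
  -- M side
  have hS := phi_S p x s t N hNt
  have hM : (Polynomial.X : Polynomial (ZMod p)) ^ p ∣
      Neg1 p 1 * Neg1 p x * (1 + h0 p x s) ^ N - φM := by
    rw [hφM, Mm, Polynomial.map_mul, phi_mapC]
    exact cong_mul (cong_refl _ _) hS
  -- the common target
  have hg : (1 : Polynomial (ZMod p)) + h0 p x s = q1 * qx ^ s := by
    rw [h0, hq1, hqx, Polynomial.C_1]
    ring
  have hgN : (1 + h0 p x s) ^ N = q1 ^ N * qx ^ (s * N) := by
    rw [hg, mul_pow, ← pow_mul, mul_comm s N]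
  set V : Polynomial (ZMod p) := q1 * qx with hV
  have key1 : V * (q1 ^ (N - 1) * qx ^ (s * N - 1)) = q1 ^ N * qx ^ (s * N) := by
    have e1 : q1 * q1 ^ (N - 1) = q1 ^ N := by
      rw [← pow_succ']
      congr 1
      omega
    have e2 : qx * qx ^ (s * N - 1) = qx ^ (s * N) := by
      rw [← pow_succ']
      congr 1
      omega
    rw [hV, show q1 * qx * (q1 ^ (N - 1) * qx ^ (s * N - 1))
        = (q1 * q1 ^ (N - 1)) * (qx * qx ^ (s * N - 1)) by ring, e1, e2]
  have key2 : (Polynomial.X : Polynomial (ZMod p)) ^ p ∣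
      V * (Neg1 p 1 * Neg1 p x * (1 + h0 p x s) ^ N) - q1 ^ N * qx ^ (s * N) := by
    have e : V * (Neg1 p 1 * Neg1 p x * (1 + h0 p x s) ^ N)
        = (q1 * Neg1 p 1) * ((qx * Neg1 p x) * (1 + h0 p x s) ^ N) := by
      rw [hV]; ring
    have h1 : (Polynomial.X : Polynomial (ZMod p)) ^ p ∣ q1 * Neg1 p 1 - 1 := by
      have := neg1_mul p 1
      rwa [← hq1] at this
    have h2 : (Polynomial.X : Polynomial (ZMod p)) ^ p ∣
        (qx * Neg1 p x) * (1 + h0 p x s) ^ N - 1 * (1 + h0 p x s) ^ N :=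
      cong_mul (by have := neg1_mul p x; rwa [← hqx] at this) (cong_refl _ _)
    have h3 := cong_mul h1 h2
    rw [e]
    have e2 : (1 : Polynomial (ZMod p)) * (1 * (1 + h0 p x s) ^ N) = q1 ^ N * qx ^ (s * N) := by
      rw [one_mul, one_mul, hgN]
    rwa [e2] at h3
  -- combine
  have hVL : (Polynomial.X : Polynomial (ZMod p)) ^ p ∣ q1 ^ N * qx ^ (s * N) - V * φL := by
    have := cong_mul (cong_refl p V) hL
    rwa [key1] at this
  have hVM : (Polynomial.X : Polynomial (ZMod p)) ^ p ∣ q1 ^ N * qx ^ (s * N) - V * φM := by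
    have h4 := cong_mul (cong_refl p V) hM
    have h5 := dvd_sub h4 key2
    rwa [show V * (Neg1 p 1 * Neg1 p x * (1 + h0 p x s) ^ N) - V * φM
        - (V * (Neg1 p 1 * Neg1 p x * (1 + h0 p x s) ^ N) - q1 ^ N * qx ^ (s * N))
        = q1 ^ N * qx ^ (s * N) - V * φM by ring] at h5
  have hdiff : (Polynomial.X : Polynomial (ZMod p)) ^ p ∣ V * (φL - φM) := by
    have := dvd_sub hVM hVL
    rwa [show q1 ^ N * qx ^ (s * N) - V * φM - (q1 ^ N * qx ^ (s * N) - V * φL)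
        = V * (φL - φM) by ring] at this
  have hV0 : V.coeff 0 ≠ 0 := by
    rw [hV, Polynomial.mul_coeff_zero, hq1, hqx]
    simp
  exact cong_cancel V hV0 p _ hdiff

end PartB

namespace PartB

open Polynomial Finset

variable (p : ℕ) [Fact p.Prime]

lemma B0 (s : ℕ) :
    bPoly p 1 s = (Lh p (-(1 : ZMod p) / (s : ZMod p)) s).coeff (p - 1) := by
  have h2 : 2 ≤ p := (Fact.out : p.Prime).two_le
  set x : ZMod p := -(1 : ZMod p) / (s : ZMod p) with hx
  rw [Lh, Polynomial.coeff_mul, Finset.Nat.sum_antidiagonal_eq_sum_range_succ_mk,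
    show (p - 1).succ = p by omega, ← Finset.sum_range_reflect, bPoly]
  refine Finset.sum_congr rfl fun k hk => ?_
  rw [Finset.mem_range] at hk
  simp only [Prod.fst, Prod.snd]
  rw [show p - 1 - (p - 1 - k) = k by omega]
  rw [W_coeff, W_coeff, if_pos (by omega : p - 1 - k < p), if_pos hk]
  simp only [Nat.cast_one]
  rw [bin, bin, show Polynomial.C (1 : ZMod p) * Polynomial.X - 1
      = Polynomial.X - 1 by rw [Polynomial.C_1, one_mul]]
  have hc : (-(1 : ZMod p) / (s : ZMod p)) ^ k /
        (((p - 1 - k).factorial : ZMod p) * ((k.factorial : ZMod p)))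
      = (1 : ZMod p) ^ (p - 1 - k) * (((p - 1 - k).factorial : ZMod p))⁻¹ *
          ((-(1 : ZMod p) / (s : ZMod p)) ^ k * ((k.factorial : ZMod p))⁻¹) := by
    rw [one_pow, div_eq_mul_inv, mul_inv]
    ring
  rw [← hx] at hc
  rw [hc, map_mul, map_mul, map_mul]
  ring

end PartB

namespace PartB

open Polynomial Finset

variable (p : ℕ) [Fact p.Prime]

lemma bin_natDeg (β : Polynomial (ZMod p)) (hβ : β.natDegree ≤ 1) (n : ℕ) :
    (bin p β n).natDegree ≤ n := by
  have hcomp : Polynomial.eval β (descPochhammer (Polynomial (ZMod p)) n)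
      = (descPochhammer (ZMod p) n).comp β := by
    rw [← descPochhammer_map (Polynomial.C : ZMod p →+* Polynomial (ZMod p)) n,
      Polynomial.eval_map]
    rfl
  refine (Polynomial.natDegree_C_mul_le _ _).trans ?_
  rw [hcomp]
  refine (Polynomial.natDegree_comp_le).trans ?_
  rw [descPochhammer_natDegree]
  calc n * β.natDegree ≤ n * 1 := Nat.mul_le_mul_left n hβ
    _ = n := mul_one n

lemma deg_X_sub_one : ((Polynomial.X : Polynomial (ZMod p)) - 1).natDegree ≤ 1 := by
  refine (Polynomial.natDegree_sub_le _ _).trans ?_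
  simp

lemma deg_CsX_sub_one (s : ℕ) :
    ((Polynomial.C (s : ZMod p)) * Polynomial.X - 1).natDegree ≤ 1 := by
  refine (Polynomial.natDegree_sub_le _ _).trans ?_
  simp only [Polynomial.natDegree_one]
  refine max_le ((Polynomial.natDegree_C_mul_le _ _).trans ?_) (by omega)
  simp

lemma Lh_coeff_deg (x : ZMod p) (s : ℕ) (n : ℕ) (hn : n < p) :
    ((Lh p x s).coeff n).natDegree < p := by
  rw [Lh, Polynomial.coeff_mul]
  refine lt_of_le_of_lt (Polynomial.natDegree_sum_le_of_forall_le _ _ fun ij hij => ?_)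
    (show n < p from hn)
  have hij' := Finset.HasAntidiagonal.mem_antidiagonal.mp hij
  refine (Polynomial.natDegree_mul_le).trans ?_
  have b1 : ((W p 1 (Polynomial.X - 1)).coeff ij.1).natDegree ≤ ij.1 := by
    rw [W_coeff]
    split
    · exact (Polynomial.natDegree_C_mul_le _ _).trans (bin_natDeg p _ (deg_X_sub_one p) _)
    · simp
  have b2 : ((W p x (Polynomial.C (s : ZMod p) * Polynomial.X - 1)).coeff ij.2).natDegree
      ≤ ij.2 := by
    rw [W_coeff]
    split
    · exact (Polynomial.natDegree_C_mul_le _ _).trans (bin_natDeg p _ (deg_CsX_sub_one p s) _)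
    · simp
  omega

lemma Sm_coeff (x : ZMod p) (s : ℕ) (k : ℕ) :
    (Sm p x s).coeff k
      = ∑ j ∈ Finset.range p, bin p Polynomial.X j *
          Polynomial.C (((h0 p x s) ^ j).coeff k) := by
  rw [Sm, Polynomial.finset_sum_coeff]
  refine Finset.sum_congr rfl fun j _ => ?_
  rw [Polynomial.coeff_C_mul, ← Polynomial.map_pow, Polynomial.coeff_map]

lemma Sm_coeff_deg_le (x : ZMod p) (s : ℕ) (k : ℕ) (bound : ℕ)
    (hb : ∀ j < p, ((h0 p x s) ^ j).coeff k ≠ 0 → j ≤ bound) :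
    ((Sm p x s).coeff k).natDegree ≤ bound := by
  rw [Sm_coeff]
  refine Polynomial.natDegree_sum_le_of_forall_le _ _ fun j hj => ?_
  rw [Finset.mem_range] at hj
  by_cases hc : ((h0 p x s) ^ j).coeff k = 0
  · rw [hc]
    simp
  · refine (Polynomial.natDegree_mul_le).trans ?_
    have := bin_natDeg p Polynomial.X (by simp) j
    have := hb j hj hc
    have := Polynomial.natDegree_C (((h0 p x s) ^ j).coeff k)
    omega

lemma Mm_coeff_deg (x : ZMod p) (s : ℕ) (n : ℕ) (hn : n < p) :
    ((Mm p x s).coeff n).natDegree < p := by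
  have h2 : 2 ≤ p := (Fact.out : p.Prime).two_le
  rw [Mm, Polynomial.coeff_mul]
  refine lt_of_le_of_lt (Polynomial.natDegree_sum_le_of_forall_le _ _ fun ij _ => ?_)
    (show p - 1 < p by omega)
  refine (Polynomial.natDegree_mul_le).trans ?_
  have b1 : ((Polynomial.map Polynomial.C (Neg1 p 1 * Neg1 p x)).coeff ij.1).natDegree = 0 := by
    rw [Polynomial.coeff_map]
    exact Polynomial.natDegree_C _
  have b2 : ((Sm p x s).coeff ij.2).natDegree ≤ p - 1 :=
    Sm_coeff_deg_le p x s _ _ (fun j hj _ => by omega)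
  omega

lemma coeff_LM_eq (x : ZMod p) (s : ℕ) (hs0 : 0 < s) (n : ℕ) (hn : n < p) :
    (Lh p x s).coeff n = (Mm p x s).coeff n := by
  have h2 : 2 ≤ p := (Fact.out : p.Prime).two_le
  refine sub_eq_zero.mp ?_
  refine Polynomial.eq_zero_of_natDegree_lt_card_of_eval_eq_zero' _ Finset.univ
    (fun t _ => ?_) ?_
  · have hNex : ∃ N : ℕ, 1 ≤ N ∧ (N : ZMod p) = t := by
      by_cases ht : t = 0
      · exact ⟨p, by omega, by rw [ht, ZMod.natCast_self]⟩
      · exact ⟨t.val, Nat.one_le_iff_ne_zero.mpr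
          (fun h => ht (by rwa [ZMod.val_eq_zero] at h)), ZMod.natCast_rightInverse t⟩
    obtain ⟨N, hN1, hNt⟩ := hNex
    have hdvd := pointwise p x s hs0 t N hN1 hNt
    have := (Polynomial.X_pow_dvd_iff.mp hdvd) n hn
    rw [Polynomial.coeff_sub, Polynomial.coeff_map, Polynomial.coeff_map] at this
    rw [Polynomial.eval_sub]
    exact this
  · refine lt_of_le_of_lt (Polynomial.natDegree_sub_le _ _) ?_
    rw [Finset.card_univ, ZMod.card]
    exact max_lt (Lh_coeff_deg p x s n hn) (Mm_coeff_deg p x s n hn)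

end PartB

namespace PartB

open Polynomial Finset

variable (p : ℕ) [Fact p.Prime]

lemma pow_coeff0 (x : ZMod p) (s : ℕ) : ((1 + Polynomial.C x * Polynomial.X) ^ s).coeff 0 = 1 := by
  rw [Polynomial.coeff_zero_eq_eval_zero]
  simp

lemma pow_coeff1 (x : ZMod p) (s : ℕ) :
    ((1 + Polynomial.C x * Polynomial.X) ^ s).coeff 1 = (s : ZMod p) * x := by
  induction s with
  | zero => simp [Polynomial.coeff_one]
  | succ s ih =>
    rw [pow_succ, show (1 + Polynomial.C x * Polynomial.X) ^ s *
          (1 + Polynomial.C x * Polynomial.X)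
        = (1 + Polynomial.C x * Polynomial.X) ^ s +
            ((1 + Polynomial.C x * Polynomial.X) ^ s * Polynomial.C x) * Polynomial.X by ring,
      Polynomial.coeff_add, ih, show (1 : ℕ) = 0 + 1 by rfl, Polynomial.coeff_mul_X,
      Polynomial.coeff_mul_C, pow_coeff0]
    push_cast
    ring

lemma h0_coeff1 (s : ℕ) (hs : (s : ZMod p) ≠ 0) :
    (h0 p (-(1 : ZMod p) / (s : ZMod p)) s).coeff 1 = 0 := by
  set x : ZMod p := -(1 : ZMod p) / (s : ZMod p) with hx
  rw [h0, Polynomial.coeff_sub,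
    show (1 + Polynomial.X) * (1 + Polynomial.C x * Polynomial.X) ^ s
      = (1 + Polynomial.C x * Polynomial.X) ^ s +
          Polynomial.X * (1 + Polynomial.C x * Polynomial.X) ^ s by ring,
    Polynomial.coeff_add, pow_coeff1, show (1 : ℕ) = 0 + 1 by rfl, Polynomial.coeff_X_mul,
    pow_coeff0]
  have hsx : (s : ZMod p) * x = -1 := by
    rw [hx, mul_comm, div_mul_cancel₀ _ hs]
  rw [hsx]
  simp [Polynomial.coeff_one]

lemma h0_dvd_sq (s : ℕ) (hs : (s : ZMod p) ≠ 0) :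
    (Polynomial.X : Polynomial (ZMod p)) ^ 2 ∣ h0 p (-(1 : ZMod p) / (s : ZMod p)) s := by
  rw [Polynomial.X_pow_dvd_iff]
  intro d hd
  interval_cases d
  · exact h0_coeff0 p _ s
  · exact h0_coeff1 p s hs

lemma deg_b (s : ℕ) (hs0 : 0 < s) (hsp : s < p - 1) :
    (bPoly p 1 s).natDegree ≤ (p - 1) / 2 := by
  have h2 : 2 ≤ p := (Fact.out : p.Prime).two_le
  have hs := PartA.s_cast_ne p s hs0 hsp
  set x : ZMod p := -(1 : ZMod p) / (s : ZMod p) with hx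
  rw [B0 p s, ← hx, coeff_LM_eq p x s hs0 (p - 1) (by omega), Mm, Polynomial.coeff_mul]
  refine Polynomial.natDegree_sum_le_of_forall_le _ _ fun ij hij => ?_
  have hij' := Finset.HasAntidiagonal.mem_antidiagonal.mp hij
  refine (Polynomial.natDegree_mul_le).trans ?_
  have b1 : ((Polynomial.map Polynomial.C (Neg1 p 1 * Neg1 p x)).coeff ij.1).natDegree = 0 := by
    rw [Polynomial.coeff_map]
    exact Polynomial.natDegree_C _
  have b2 : ((Sm p x s).coeff ij.2).natDegree ≤ (p - 1) / 2 := by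
    refine Sm_coeff_deg_le p x s _ _ fun j hj hc => ?_
    have hdvd : (Polynomial.X : Polynomial (ZMod p)) ^ (2 * j) ∣ (h0 p x s) ^ j := by
      rw [pow_mul]
      exact pow_dvd_pow_of_dvd (by rw [hx]; exact h0_dvd_sq p s hs) j
    have hle : 2 * j ≤ ij.2 := by
      by_contra hlt
      exact hc ((Polynomial.X_pow_dvd_iff.mp hdvd) ij.2 (by omega))
    omega
  omega

end PartB

theorem stmt10 (p s : ℕ) [Fact p.Prime] (hodd : Odd p) (hs0 : 0 < s) (hsp : s < p - 1) :
    (bPoly p 1 s) * (bPoly p 1 s).comp (-Polynomial.X) =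
      1 - Polynomial.X ^ (p - 1) := by
  have h2 : 2 ≤ p := (Fact.out : p.Prime).two_le
  set b := bPoly p 1 s with hb
  refine sub_eq_zero.mp ?_
  refine Polynomial.eq_zero_of_natDegree_lt_card_of_eval_eq_zero' _ Finset.univ
    (fun t _ => ?_) ?_
  · rw [Polynomial.eval_sub, Polynomial.eval_mul, Polynomial.eval_comp, Polynomial.eval_neg,
      Polynomial.eval_X, Polynomial.eval_sub, Polynomial.eval_one, Polynomial.eval_pow,
      Polynomial.eval_X, PartA.evalProd p s hodd hs0 hsp t, sub_self]
  · rw [Finset.card_univ, ZMod.card]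
    refine lt_of_le_of_lt (Polynomial.natDegree_sub_le _ _) ?_
    have hd : (p - 1) / 2 + (p - 1) / 2 = p - 1 := by
      obtain ⟨m, hm⟩ := hodd
      omega
    have hdb : b.natDegree ≤ (p - 1) / 2 := by
      rw [hb]
      exact PartB.deg_b p s hs0 hsp
    have hcomp : (b.comp (-Polynomial.X)).natDegree ≤ (p - 1) / 2 := by
      refine (Polynomial.natDegree_comp_le).trans ?_
      have := PartB.deg_b p s hs0 hsp
      have hnegX : (-Polynomial.X : Polynomial (ZMod p)).natDegree = 1 := by
        rw [Polynomial.natDegree_neg, Polynomial.natDegree_X]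
      rw [hnegX, mul_one]
      exact this
    have hmul : (b * b.comp (-Polynomial.X)).natDegree ≤ p - 1 := by
      refine (Polynomial.natDegree_mul_le).trans ?_
      omega
    have hrhs : ((1 : Polynomial (ZMod p)) - Polynomial.X ^ (p - 1)).natDegree ≤ p - 1 := by
      refine (Polynomial.natDegree_sub_le _ _).trans ?_
      simp
    refine max_lt ?_ ?_ <;> omega
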